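/- arXiv:1210.5206 — 4 statements merged into one kernel-verified Lean document; each statement's English description precedes it below -/
import Mathlib

section
/- Let (W,S) be an irreducible Coxeter system and v ∈ V with v not orthogonal to all of Π. Then the affine span of the orbit Wv equals v + RΠ, where RΠ is the linear span of the simple roots. -/
open scoped BigOperators

/-- Nonnegative conical span of a subset of a real vector space. -/
def nnCone {V : Type*} [AddCommGroup V] [Module ℝ V] (Γ : Set V) : Set V :=
  { v | ∃ (s : Finset V) (c : V → ℝ), ↑s ⊆ Γ ∧ (∀ x ∈ s, 0 ≤ c x) ∧ v = ∑ x ∈ s, c x • x }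

/-- A based root system for a Coxeter system, in a real quadratic space. -/
structure BasedRootSystem (V : Type*) [AddCommGroup V] [Module ℝ V] where
  form : V →ₗ[ℝ] V →ₗ[ℝ] ℝ
  form_symm : ∀ u v, form u v = form v u
  simples : Set V
  posIndep : ∀ s : Finset V, ↑s ⊆ simples → ∀ c : V → ℝ,
      (∀ v ∈ s, 0 < c v) → ∑ v ∈ s, c v • v = 0 → s = ∅
  norm_one : ∀ α ∈ simples, form α α = 1
  pairing : ∀ α ∈ simples, ∀ β ∈ simples, α ≠ β →
      (∃ m : ℕ, 2 ≤ m ∧ form α β = -Real.cos (Real.pi / (m : ℝ))) ∨ form α β ≤ -1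

namespace BasedRootSystem

variable {V : Type*} [AddCommGroup V] [Module ℝ V]

/-- `g` is the reflection in the vector `α` (so `g v = v - ⟨v, α^∨⟩ α` with
`α^∨ = (2/⟨α,α⟩)α`). -/
def IsRefl (R : BasedRootSystem V) (α : V) (g : V ≃ₗ[ℝ] V) : Prop :=
  ∀ v, g v = v - ((2 / R.form α α) * R.form v α) • α

/-- The Coxeter group `W`, generated by the simple reflections. -/
def W (R : BasedRootSystem V) : Subgroup (V ≃ₗ[ℝ] V) :=
  Subgroup.closure { g | ∃ α ∈ R.simples, R.IsRefl α g }

/-- The reflection subgroup generated by reflections in the elements of `Δ`. -/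
def subW (R : BasedRootSystem V) (Δ : Set V) : Subgroup (V ≃ₗ[ℝ] V) :=
  Subgroup.closure { g | ∃ α ∈ Δ, R.IsRefl α g }

/-- The root system `Φ = WΠ`. -/
def roots (R : BasedRootSystem V) : Set V :=
  { β | ∃ w ∈ R.W, ∃ α ∈ R.simples, β = w α }

/-- The positive roots `Φ⁺ = Φ ∩ ℝ_{≥0}Π`. -/
def posRoots (R : BasedRootSystem V) : Set V := R.roots ∩ nnCone R.simples

/-- The fundamental chamber `𝒞`. -/
def chamber (R : BasedRootSystem V) : Set V := { v | ∀ α ∈ R.simples, 0 ≤ R.form v α }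

/-- `𝒦 = ℝ_{≥0}Π ∩ (−𝒞)`. -/
def K (R : BasedRootSystem V) : Set V :=
  nnCone R.simples ∩ { v | ∀ α ∈ R.simples, R.form v α ≤ 0 }

/-- The imaginary cone `𝒵 = ⋃_{w ∈ W} w(𝒦)`. -/
def imaginaryCone (R : BasedRootSystem V) : Set V :=
  { v | ∃ w ∈ R.W, ∃ k ∈ R.K, v = w k }

/-- The standard length function of `(W,S)`. -/
noncomputable def length (R : BasedRootSystem V) (w : V ≃ₗ[ℝ] V) : ℕ :=
  sInf { n | ∃ l : List (V ≃ₗ[ℝ] V), l.length = n ∧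
      (∀ g ∈ l, ∃ α ∈ R.simples, R.IsRefl α g) ∧ w = l.prod }

/-- Irreducibility of the Coxeter system: the Coxeter graph on `Π` is connected. -/
def Irred (R : BasedRootSystem V) : Prop :=
  ∀ A B : Set V, A ∪ B = R.simples → (∀ a ∈ A, ∀ b ∈ B, R.form a b = 0) →
    A = ∅ ∨ B = ∅

/-- `Δ` is a support of `v`: `v` is a strictly positive combination of `Δ ⊆ Π`. -/
def IsSupport (R : BasedRootSystem V) (Δ : Finset V) (v : V) : Prop :=
  ↑Δ ⊆ R.simples ∧ ∃ c : V → ℝ, (∀ x ∈ Δ, 0 < c x) ∧ v = ∑ x ∈ Δ, c x • x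

/-- `Δ` is connected in the Coxeter graph. -/
def ConnSubset (R : BasedRootSystem V) (Δ : Finset V) : Prop :=
  ∀ x ∈ Δ, ∀ y ∈ Δ, Relation.ReflTransGen
    (fun a b => a ∈ Δ ∧ b ∈ Δ ∧ R.form a b ≠ 0) x y

end BasedRootSystem

namespace BasedRootSystem

variable {V : Type*} [AddCommGroup V] [Module ℝ V]

/-- The simple reflection in `α`, as a linear map (assuming `⟨α,α⟩ = 1`). -/
noncomputable def sReflMap (R : BasedRootSystem V) (α : V) : V →ₗ[ℝ] V :=
  LinearMap.id - ((2 : ℝ) • R.form.flip α).smulRight α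

lemma sReflMap_apply (R : BasedRootSystem V) (α u : V) :
    R.sReflMap α u = u - (2 * R.form u α) • α := by
  simp [sReflMap, LinearMap.smulRight_apply, smul_smul]

lemma sReflMap_involutive (R : BasedRootSystem V) {α : V} (hαα : R.form α α = 1) :
    Function.Involutive (R.sReflMap α) := by
  intro u
  simp only [sReflMap_apply, map_sub, LinearMap.sub_apply, map_smul, LinearMap.smul_apply,
    smul_eq_mul, hαα, mul_one]
  module

/-- The simple reflection in `α`, as a linear equivalence. -/
noncomputable def sRefl (R : BasedRootSystem V) (α : V) (hαα : R.form α α = 1) : V ≃ₗ[ℝ] V :=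
  LinearEquiv.ofInvolutive (R.sReflMap α) (R.sReflMap_involutive hαα)

lemma sRefl_isRefl (R : BasedRootSystem V) (α : V) (hαα : R.form α α = 1) :
    R.IsRefl α (R.sRefl α hαα) := by
  intro u
  simp [sRefl, sReflMap_apply, hαα]

lemma sRefl_mem_W (R : BasedRootSystem V) {α : V} (hα : α ∈ R.simples)
    (hαα : R.form α α = 1) : R.sRefl α hαα ∈ R.W :=
  Subgroup.subset_closure ⟨α, hα, R.sRefl_isRefl α hαα⟩

/-- Every element of `W` moves every vector by an element of `ℝΠ`. -/
lemma mul_apply' (x y : V ≃ₗ[ℝ] V) (u : V) : (x * y) u = x (y u) := rfl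

lemma inv_apply_apply' (x : V ≃ₗ[ℝ] V) (u : V) : x (x⁻¹ u) = u :=
  x.apply_symm_apply u

/-- Every element of `W` moves every vector by an element of `ℝΠ`. -/
lemma sub_mem_span (R : BasedRootSystem V) {w : V ≃ₗ[ℝ] V} (hw : w ∈ R.W) (u : V) :
    w u - u ∈ Submodule.span ℝ R.simples := by
  revert u
  induction hw using Subgroup.closure_induction with
  | mem g hg =>
      intro u
      obtain ⟨α, hα, hrefl⟩ := hg
      rw [hrefl u]
      simp only [sub_sub_cancel_left]
      exact Submodule.neg_mem _ (Submodule.smul_mem _ _ (Submodule.subset_span hα))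
  | one => intro u; simpa using Submodule.zero_mem _
  | mul x y hx hy ihx ihy =>
      intro u
      have h : (x * y) u - u = (x (y u) - y u) + (y u - u) := by
        rw [mul_apply']; abel
      rw [h]
      exact Submodule.add_mem _ (ihx (y u)) (ihy u)
  | inv x hx ih =>
      intro u
      have h : x⁻¹ u - u = -(x (x⁻¹ u) - x⁻¹ u) := by
        rw [inv_apply_apply']; abel
      rw [h]
      exact Submodule.neg_mem _ (ih (x⁻¹ u))

/-- Under irreducibility, every simple root is non-orthogonal to some orbit point. -/
lemma exists_orbit_not_orthogonal (R : BasedRootSystem V) (hirr : R.Irred)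
    (v : V) (hv : ¬ ∀ α ∈ R.simples, R.form v α = 0) :
    ∀ α ∈ R.simples, ∃ w ∈ R.W, R.form (w v) α ≠ 0 := by
  set A : Set V := {α ∈ R.simples | ∃ w ∈ R.W, R.form (w v) α ≠ 0} with hA
  set B : Set V := R.simples \ A with hB
  have hunion : A ∪ B = R.simples := by
    apply Set.union_diff_cancel
    exact fun x hx => hx.1
  have horth : ∀ a ∈ A, ∀ b ∈ B, R.form a b = 0 := by
    rintro a ⟨ha, w, hw, hwa⟩ b hb
    have haa : R.form a a = 1 := R.norm_one a ha
    have hmem : R.sRefl a haa * w ∈ R.W := mul_mem (R.sRefl_mem_W ha haa) hw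
    have hb0 : R.form ((R.sRefl a haa * w) v) b = 0 := by
      by_contra h
      exact hb.2 ⟨hb.1, _, hmem, h⟩
    have hwb0 : R.form (w v) b = 0 := by
      by_contra h
      exact hb.2 ⟨hb.1, _, hw, h⟩
    have : R.form ((R.sRefl a haa * w) v) b
        = R.form (w v) b - (2 * R.form (w v) a) * R.form a b := by
      have : (R.sRefl a haa * w) v = w v - (2 * R.form (w v) a) • a := by
        rw [BasedRootSystem.mul_apply', R.sRefl_isRefl a haa (w v), haa, div_one]
      rw [this]
      simp [smul_eq_mul]
    rw [hb0, hwb0] at this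
    have h2 : (2 * R.form (w v) a) * R.form a b = 0 := by linarith
    rcases mul_eq_zero.mp h2 with h | h
    · rcases mul_eq_zero.mp h with h' | h'
      · norm_num at h'
      · exact (hwa h').elim
    · exact h
  rcases hirr A B hunion horth with hAe | hBe
  · exfalso
    push_neg at hv
    obtain ⟨α, hα, hα0⟩ := hv
    have : α ∈ A := ⟨hα, 1, one_mem _, by simpa using hα0⟩
    rw [hAe] at this
    exact this
  · intro α hα
    have : α ∈ A := by
      have : α ∈ A ∪ B := hunion ▸ hα
      rcases this with h | h
      · exact h
      · rw [hBe] at h; exact h.elim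
    exact this.2

end BasedRootSystem

/-- If `(W,S)` is irreducible and `v` is not orthogonal to all of `Π`,
then the affine span of the orbit `Wv` equals `v + ℝΠ`. -/
theorem statement2 {V : Type*} [AddCommGroup V] [Module ℝ V]
    (R : BasedRootSystem V) (hirr : R.Irred)
    (v : V) (hv : ¬ ∀ α ∈ R.simples, R.form v α = 0) :
    (affineSpan ℝ { x | ∃ w ∈ R.W, x = w v } : Set V)
      = (fun u => v + u) '' (Submodule.span ℝ R.simples : Set V) := by
  set orbit : Set V := { x | ∃ w ∈ R.W, x = w v } with horbit
  have hvorb : v ∈ orbit := ⟨1, one_mem _, by simp⟩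
  have hvaff : v ∈ affineSpan ℝ orbit := subset_affineSpan ℝ orbit hvorb
  -- vectorSpan of the orbit is contained in ℝΠ
  have hle : vectorSpan ℝ orbit ≤ Submodule.span ℝ R.simples := by
    rw [vectorSpan_def]
    apply Submodule.span_le.mpr
    rintro x ⟨x₁, ⟨w₁, hw₁, rfl⟩, x₂, ⟨w₂, hw₂, rfl⟩, rfl⟩
    have h1 := R.sub_mem_span hw₁ v
    have h2 := R.sub_mem_span hw₂ v
    show w₁ v -ᵥ w₂ v ∈ _
    rw [vsub_eq_sub]
    have h : w₁ v - w₂ v = (w₁ v - v) - (w₂ v - v) := by abel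
    rw [h]
    exact Submodule.sub_mem _ h1 h2
  -- ℝΠ is contained in the vectorSpan of the orbit
  have hge : Submodule.span ℝ R.simples ≤ vectorSpan ℝ orbit := by
    apply Submodule.span_le.mpr
    intro α hα
    obtain ⟨w, hw, hwα⟩ := R.exists_orbit_not_orthogonal hirr v hv α hα
    have haa : R.form α α = 1 := R.norm_one α hα
    have hmem : R.sRefl α haa * w ∈ R.W := mul_mem (R.sRefl_mem_W hα haa) hw
    have hdiff : (R.sRefl α haa * w) v -ᵥ w v = -((2 * R.form (w v) α) • α) := by
      rw [BasedRootSystem.mul_apply', R.sRefl_isRefl α haa (w v), haa, div_one, vsub_eq_sub]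
      abel
    have hd : (R.sRefl α haa * w) v -ᵥ w v ∈ vectorSpan ℝ orbit :=
      vsub_mem_vectorSpan ℝ ⟨_, hmem, rfl⟩ ⟨_, hw, rfl⟩
    rw [hdiff] at hd
    have hd' : (2 * R.form (w v) α) • α ∈ vectorSpan ℝ orbit := by
      have := Submodule.neg_mem _ hd
      simpa using this
    have hc : (2 * R.form (w v) α) ≠ 0 := by
      intro h
      rcases mul_eq_zero.mp h with h | h
      · norm_num at h
      · exact hwα h
    have := Submodule.smul_mem _ (2 * R.form (w v) α)⁻¹ hd'
    rwa [smul_smul, inv_mul_cancel₀ hc, one_smul] at this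
  ext x
  constructor
  · intro hx
    refine ⟨x - v, ?_, by show v + (x - v) = x; abel⟩
    have : x -ᵥ v ∈ (affineSpan ℝ orbit).direction :=
      AffineSubspace.vsub_mem_direction hx hvaff
    rw [direction_affineSpan] at this
    exact hle this
  · rintro ⟨u, hu, rfl⟩
    have hu' : u ∈ (affineSpan ℝ orbit).direction := by
      rw [direction_affineSpan]; exact hge hu
    have := AffineSubspace.vadd_mem_of_mem_direction hu' hvaff
    simpa [vadd_eq_add, add_comm] using this
end

section
/- Let (W,S) be an irreducible Coxeter system, α ∈ Φ a root, and Z the stabilizer of α in W. Then the linear span of the orbit Wα equals the linear span of Φ, W acts faithfully on Wα, the intersection of all W-conjugates of Z is trivial, and if the orbit Wα is finite then W is finite. -/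
open scoped BigOperators

/-!
The span `M` of the orbit `Wα` is `W`-stable. Writing `α = w p` with `p` simple, `M` contains `p`;
and if a simple root `a ∈ M` is not orthogonal to a simple root `b`, then `b ∈ M`, because
`a - s_b a` is a nonzero multiple of `b`. By irreducibility `M ⊇ Π`, hence `M = span Φ`.

The other three claims follow once an element of `W` fixing every simple root is known to be
trivial: a `g` lying in every conjugate of `Z` lies in `W` and fixes every `uα`, and `W` embeds in
the permutations of a finite orbit. For `w ≠ 1` write `w = w' s_β` with `ℓ(w') < ℓ(w)`. By
Humphreys' Theorem 5.4 (`ℓ(w' s_β) ≥ ℓ(w')` implies `w' β ≥ 0`) we get `w' β ≥ 0`, whereas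
`w β = β` would give `w' β = -β`.

Theorem 5.4 is proved by induction on `ℓ(w)`, factoring `w = v u` with `u` in a dihedral subgroup
`⟨s_γ, s_β⟩`. There a reduced word is alternating, shorter than the order `m` of `s_γ s_β` when
`⟨γ, β⟩ = -cos(π/m)`, and moves `γ` to `U_i(d) γ + U_j(d) β` with Chebyshev polynomials at
`d = -⟨γ, β⟩` and `-1 ≤ i, j < m`; these coefficients are nonnegative, as
`U_j(cos θ) sin θ = sin((j+1)θ)`, and for `d ≥ 1` the sequence `U_j(d)` is nondecreasing.
-/

section WordLength

variable {G : Type*} [Group G] {T T' : Set G} {t w x y : G}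

-- `0` when `w` is not a product of elements of `T`.
noncomputable def wordLength (T : Set G) (w : G) : ℕ :=
  sInf {n | ∃ l : List G, l.length = n ∧ (∀ s ∈ l, s ∈ T) ∧ w = l.prod}

theorem wordLength_prod_le {l : List G} (hl : ∀ s ∈ l, s ∈ T) :
    wordLength T l.prod ≤ l.length :=
  Nat.sInf_le ⟨l, rfl, hl, rfl⟩

theorem exists_list_of_mem_closure_of_involutive (hT : ∀ s ∈ T, s * s = 1)
    (hw : w ∈ Subgroup.closure T) : ∃ l : List G, (∀ s ∈ l, s ∈ T) ∧ l.prod = w := by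
  have hinv : T⁻¹ ⊆ T := fun s hs => by
    have h := inv_eq_of_mul_eq_one_right (hT _ hs)
    rw [inv_inv] at h
    rwa [h]
  rw [← Subgroup.mem_toSubmonoid, Subgroup.closure_toSubmonoid, Set.union_eq_left.2 hinv] at hw
  exact Submonoid.exists_list_of_mem_closure hw

theorem exists_reduced_word (hT : ∀ s ∈ T, s * s = 1) (hw : w ∈ Subgroup.closure T) :
    ∃ l : List G, l.length = wordLength T w ∧ (∀ s ∈ l, s ∈ T) ∧ l.prod = w := by
  obtain ⟨l, hl, rfl⟩ := exists_list_of_mem_closure_of_involutive hT hw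
  obtain ⟨l', hlen, hl', he⟩ := Nat.sInf_mem
    (s := {n | ∃ l' : List G, l'.length = n ∧ (∀ s ∈ l', s ∈ T) ∧ l.prod = l'.prod})
    ⟨l.length, l, rfl, hl, rfl⟩
  exact ⟨l', hlen, hl', he.symm⟩

theorem wordLength_one : wordLength T 1 = 0 :=
  Nat.le_zero.1 (wordLength_prod_le (l := []) (by simp))

theorem eq_one_of_wordLength_eq_zero (hT : ∀ s ∈ T, s * s = 1) (hw : w ∈ Subgroup.closure T)
    (h : wordLength T w = 0) : w = 1 := by
  obtain ⟨l, hlen, -, rfl⟩ := exists_reduced_word hT hw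
  rw [h, List.length_eq_zero_iff] at hlen
  simp [hlen]

theorem wordLength_mul_le (hT : ∀ s ∈ T, s * s = 1) (hx : x ∈ Subgroup.closure T)
    (hy : y ∈ Subgroup.closure T) : wordLength T (x * y) ≤ wordLength T x + wordLength T y := by
  obtain ⟨lx, hlx, hTx, rfl⟩ := exists_reduced_word hT hx
  obtain ⟨ly, hly, hTy, rfl⟩ := exists_reduced_word hT hy
  rw [← hlx, ← hly, ← List.length_append, ← List.prod_append]
  exact wordLength_prod_le fun s hs => (List.mem_append.1 hs).elim (hTx s) (hTy s)

theorem wordLength_le_one (ht : t ∈ T) : wordLength T t ≤ 1 := by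
  simpa using wordLength_prod_le (l := [t]) (by simpa using ht)

theorem wordLength_mul_le_add_one (hT : ∀ s ∈ T, s * s = 1) (hw : w ∈ Subgroup.closure T)
    (ht : t ∈ T) : wordLength T (w * t) ≤ wordLength T w + 1 :=
  (wordLength_mul_le hT hw (Subgroup.subset_closure ht)).trans
    (Nat.add_le_add_left (wordLength_le_one ht) _)

theorem wordLength_le_mul_add_one (hT : ∀ s ∈ T, s * s = 1) (hw : w ∈ Subgroup.closure T)
    (ht : t ∈ T) : wordLength T w ≤ wordLength T (w * t) + 1 := by
  have hwt := mul_mem hw (Subgroup.subset_closure ht)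
  simpa [mul_assoc, hT t ht] using wordLength_mul_le_add_one hT hwt ht

theorem wordLength_le_of_subset (hT : ∀ s ∈ T, s * s = 1) (hTT' : T ⊆ T')
    (hw : w ∈ Subgroup.closure T) : wordLength T' w ≤ wordLength T w := by
  obtain ⟨l, hlen, hl, rfl⟩ := exists_reduced_word hT hw
  exact hlen ▸ wordLength_prod_le fun s hs => hTT' (hl s hs)

theorem exists_wordLength_mul_lt (hT : ∀ s ∈ T, s * s = 1) (hw : w ∈ Subgroup.closure T)
    (h1 : w ≠ 1) : ∃ t ∈ T, wordLength T (w * t) < wordLength T w := by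
  obtain ⟨l, hlen, hl, rfl⟩ := exists_reduced_word hT hw
  obtain rfl | ⟨l', t, rfl⟩ := l.eq_nil_or_concat
  · exact absurd rfl h1
  rw [List.concat_eq_append] at *
  have ht : t ∈ T := hl t (by simp)
  refine ⟨t, ht, ?_⟩
  have hl' : ∀ s ∈ l', s ∈ T := fun s hs => hl s (by simp [hs])
  have := wordLength_prod_le hl'
  rw [← hlen]
  simpa [mul_assoc, hT t ht] using Nat.lt_succ_of_le this

theorem isChain_ne_of_reduced (hT : ∀ s ∈ T, s * s = 1) {l : List G} (hl : ∀ s ∈ l, s ∈ T)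
    (hred : l.length = wordLength T l.prod) : l.IsChain (· ≠ ·) := by
  refine List.isChain_iff_forall_rel_of_append_cons_cons.2 ?_
  rintro a b l₁ l₂ rfl rfl
  have hl' : ∀ s ∈ l₁ ++ l₂, s ∈ T := fun s hs => hl s (by simp at hs ⊢; tauto)
  have hprod : (l₁ ++ l₂).prod = (l₁ ++ a :: a :: l₂).prod := by
    simp [← mul_assoc, hT a (hl a (by simp))]
  have := wordLength_prod_le hl'
  rw [hprod, ← hred] at this
  simp at this

theorem exists_mul_eq_wordLength_add_eq (hT : ∀ s ∈ T, s * s = 1) (hT' : T' ⊆ T)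
    (hw : w ∈ Subgroup.closure T) :
    ∃ v u, v * u = w ∧ u ∈ Subgroup.closure T' ∧
      wordLength T v + wordLength T' u = wordLength T w ∧
      ∀ t ∈ T', wordLength T v ≤ wordLength T (v * t) := by
  classical
  have hex : ∃ k, ∃ v u, v * u = w ∧ u ∈ Subgroup.closure T' ∧
      wordLength T v + wordLength T' u = wordLength T w ∧ wordLength T v = k :=
    ⟨_, w, 1, mul_one w, one_mem _, by simp [wordLength_one], rfl⟩
  obtain ⟨v, u, rfl, hu, hlen, hmin⟩ := Nat.find_spec hex
  refine ⟨v, u, rfl, hu, hlen, fun t ht => ?_⟩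
  by_contra! hlt
  have hT'inv : ∀ s ∈ T', s * s = 1 := fun s hs => hT s (hT' hs)
  have hu' : u ∈ Subgroup.closure T := Subgroup.closure_mono hT' hu
  have hv : v ∈ Subgroup.closure T := by
    simpa using mul_mem hw (inv_mem hu')
  have htu : t * u ∈ Subgroup.closure T' := mul_mem (Subgroup.subset_closure ht) hu
  have hvt := wordLength_le_mul_add_one hT hv (hT' ht)
  have hltu : wordLength T' (t * u) ≤ wordLength T' u + 1 := by
    have := wordLength_mul_le hT'inv (Subgroup.subset_closure ht) hu
    have := wordLength_le_one (T := T') ht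
    omega
  have hvu : v * t * (t * u) = v * u := by rw [mul_assoc, ← mul_assoc t, hT t (hT' ht), one_mul]
  have hsplit : wordLength T (v * u) ≤ wordLength T (v * t) + wordLength T' (t * u) := by
    have := wordLength_mul_le hT (mul_mem hv (Subgroup.subset_closure (hT' ht)))
      (Subgroup.closure_mono hT' htu)
    have := wordLength_le_of_subset hT'inv hT' htu
    rw [hvu] at *
    omega
  have := Nat.find_min' hex ⟨v * t, t * u, hvu, htu, by omega, rfl⟩
  omega

end WordLength

section Alternating

variable {G : Type*} {x y : G}

def altWord (x y : G) : ℕ → List G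
  | 0 => []
  | n + 1 => altWord y x n ++ [y]

@[simp]
theorem length_altWord (x y : G) (n : ℕ) : (altWord x y n).length = n := by
  induction n generalizing x y with
  | zero => rfl
  | succ n ih => simp [altWord, ih]

theorem mem_altWord {n : ℕ} {x y s : G} (hs : s ∈ altWord x y n) : s = x ∨ s = y := by
  induction n generalizing x y with
  | zero => simp [altWord] at hs
  | succ n ih =>
    rcases List.mem_append.1 hs with hs | hs
    · exact (ih hs).symm
    · exact Or.inr (List.mem_singleton.1 hs)

theorem prod_altWord_two_mul [Monoid G] (x y : G) (k : ℕ) :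
    (altWord x y (2 * k)).prod = (x * y) ^ k := by
  induction k with
  | zero => simp [altWord]
  | succ k ih => simp [Nat.mul_succ, altWord, ih, pow_succ]

theorem prod_altWord_two_mul_add_one [Monoid G] (x y : G) (k : ℕ) :
    (altWord x y (2 * k + 1)).prod = y * (x * y) ^ k := by
  simp [altWord, prod_altWord_two_mul, ← mul_pow_mul]

theorem eq_altWord_of_isChain {l : List G} (hl : ∀ s ∈ l, s = x ∨ s = y)
    (hc : l.IsChain (· ≠ ·)) (hlast : l.getLast? = some y) : l = altWord x y l.length := by
  induction l using List.reverseRecOn generalizing x y with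
  | nil => simp at hlast
  | append_singleton l a ih =>
    obtain rfl : a = y := by simpa using hlast
    rcases l.eq_nil_or_concat with rfl | ⟨l', b, rfl⟩
    · rfl
    rw [List.concat_eq_append] at *
    have hb : b ≠ a := by
      rw [List.append_assoc, List.singleton_append] at hc
      exact (List.isChain_append_cons_cons.1 hc).2.1
    have hbx : b = x := (hl b (by simp)).resolve_right hb
    have := ih (x := a) (y := x) (fun s hs => (hl s (List.mem_append_left _ hs)).symm)
      (List.isChain_append.1 hc).1 (by simp [hbx])
    rw [List.length_append, List.length_singleton, altWord, ← this]

theorem exists_altWord_eq_append (x y : G) {m n : ℕ} (h : m ≤ n) :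
    ∃ l, (∀ s ∈ l, s = x ∨ s = y) ∧ altWord x y n = l ++ altWord x y m := by
  obtain ⟨k, rfl⟩ := Nat.exists_eq_add_of_le' h
  induction m generalizing x y with
  | zero => exact ⟨altWord x y k, fun s => mem_altWord, by simp [altWord]⟩
  | succ m ih =>
    obtain ⟨l, hl, he⟩ := ih y x (by omega)
    refine ⟨l, fun s hs => (hl s hs).symm, ?_⟩
    rw [show k + (m + 1) = k + m + 1 by omega, altWord, altWord, he, List.append_assoc]

theorem prod_altWord_eq_of_pow_eq_one [Group G] (hx : x * x = 1) (hy : y * y = 1) {m : ℕ}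
    (h : (x * y) ^ m = 1) : (altWord x y m).prod = (altWord y x m).prod := by
  have hyx : y * x = (x * y)⁻¹ := by
    rw [mul_inv_rev, inv_eq_of_mul_eq_one_right hx, inv_eq_of_mul_eq_one_right hy]
  obtain ⟨k, rfl | rfl⟩ := Nat.even_or_odd' m
  · rw [prod_altWord_two_mul, prod_altWord_two_mul, hyx, inv_pow]
    exact eq_inv_of_mul_eq_one_left (by rw [← pow_two, ← pow_mul', h])
  · rw [prod_altWord_two_mul_add_one, prod_altWord_two_mul_add_one, hyx, inv_pow]
    nth_rewrite 1 [show y = x * (x * y) by rw [← mul_assoc, hx, one_mul]]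
    rw [mul_assoc]
    refine congrArg (x * ·) (eq_inv_of_mul_eq_one_left ?_)
    rw [← pow_succ', ← pow_add, show k + 1 + k = 2 * k + 1 by omega, h]

end Alternating

section Dihedral

variable {G : Type*} [Group G] {x y u : G}

theorem eq_prod_altWord_of_wordLength_le (hx : x * x = 1) (hy : y * y = 1)
    (hu : u ∈ Subgroup.closure {x, y})
    (hle : wordLength {x, y} u ≤ wordLength {x, y} (u * x)) :
    u = (altWord x y (wordLength {x, y} u)).prod := by
  have hT : ∀ s ∈ ({x, y} : Set G), s * s = 1 := by rintro s (rfl | rfl) <;> assumption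
  obtain ⟨l, hlen, hl, rfl⟩ := exists_reduced_word hT hu
  have hl' : ∀ s ∈ l, s = x ∨ s = y := hl
  rw [← hlen]
  rcases l.eq_nil_or_concat with rfl | ⟨l', s, rfl⟩
  · simp [altWord]
  rw [List.concat_eq_append] at *
  rcases hl' s (by simp) with rfl | rfl
  · have := wordLength_prod_le (T := {s, y}) (l := l') fun t ht => hl t (by simp [ht])
    simp only [List.prod_append, List.prod_singleton, List.length_append, List.length_singleton,
      mul_assoc, hx, mul_one] at hle hlen
    omega
  · exact congrArg List.prod
      (eq_altWord_of_isChain hl' (isChain_ne_of_reduced hT hl hlen) (by simp))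

theorem wordLength_lt_of_pow_eq_one (hx : x * x = 1) (hy : y * y = 1) {m : ℕ} (hm : 0 < m)
    (h : (x * y) ^ m = 1) (hu : u ∈ Subgroup.closure {x, y})
    (hle : wordLength {x, y} u ≤ wordLength {x, y} (u * x)) : wordLength {x, y} u < m := by
  by_contra! hmn
  obtain ⟨l, hl, he⟩ := exists_altWord_eq_append x y hmn
  obtain ⟨m, rfl⟩ := Nat.exists_eq_add_of_lt hm
  have hux : u * x = (l ++ altWord x y m).prod := by
    rw [eq_prod_altWord_of_wordLength_le hx hy hu hle, he, List.prod_append,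
      prod_altWord_eq_of_pow_eq_one hx hy h]
    simp [altWord, mul_assoc, hx]
  have hlen := congrArg List.length he
  have := wordLength_prod_le (T := {x, y}) (l := l ++ altWord x y m) fun s hs =>
    (List.mem_append.1 hs).elim (hl s) mem_altWord
  rw [← hux] at this
  simp only [length_altWord, List.length_append] at this hlen
  omega

end Dihedral

section Chebyshev

open Polynomial Polynomial.Chebyshev Real

/-- Mathlib's formulas for `(s_α s_β)^k α` evaluate `S`-polynomials at `t = 4d² - 2`, where
`d = -⟨α, β⟩`; this rewrites them as `U`-polynomials at `d`. -/
theorem S_eval_add_S_eval_eq_U_eval {A : Type*} [CommRing A] (d : A) (k : ℕ) :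
    (S A k).eval (4 * d ^ 2 - 2) + (S A (k - 1)).eval (4 * d ^ 2 - 2) = (U A (2 * k)).eval d ∧
      2 * d * (S A (k - 1)).eval (4 * d ^ 2 - 2) = (U A (2 * k - 1)).eval d := by
  induction k with
  | zero => simp
  | succ k ih =>
    have hS := congrArg (eval (4 * d ^ 2 - 2)) (S_add_one A k)
    have hU₁ := congrArg (eval d) (U_add_one A (2 * k))
    have hU₂ := congrArg (eval d) (U_add_one A (2 * k + 1))
    simp only [eval_sub, eval_mul, eval_X, eval_ofNat] at hS hU₁ hU₂
    rw [add_sub_cancel_right] at hU₂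
    push_cast
    rw [add_sub_cancel_right, show 2 * ((k : ℤ) + 1) = 2 * k + 1 + 1 by ring, add_sub_cancel_right,
      hU₂, hU₁, hS, ← ih.1, ← ih.2]
    constructor <;> ring

theorem U_eval_nonneg_of_one_le {d : ℝ} (hd : 1 ≤ d) {j : ℤ} (hj : -1 ≤ j) :
    0 ≤ (U ℝ j).eval d := by
  have key : ∀ n : ℕ, 0 ≤ (U ℝ (n - 1)).eval d ∧ (U ℝ (n - 1)).eval d ≤ (U ℝ n).eval d := by
    intro n
    induction n with
    | zero => simp
    | succ n ih =>
      have hU := congrArg (eval d) (U_add_one ℝ n)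
      simp only [eval_sub, eval_mul, eval_X, eval_ofNat] at hU
      push_cast
      rw [add_sub_cancel_right, hU]
      constructor <;> nlinarith
  obtain ⟨n, rfl⟩ : ∃ n : ℕ, j = n - 1 := ⟨(j + 1).toNat, by omega⟩
  exact (key n).1

theorem sin_pi_div_pos {m : ℕ} (hm : 1 < m) : 0 < sin (π / m) :=
  sin_pos_of_pos_of_lt_pi (by positivity) (div_lt_self pi_pos (by exact_mod_cast hm))

theorem U_eval_cos_pi_div_nonneg {m : ℕ} (hm : 1 < m) {j : ℤ} (hj : -1 ≤ j) (hjm : j < m) :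
    0 ≤ (U ℝ j).eval (cos (π / m)) := by
  refine nonneg_of_mul_nonneg_left ?_ (sin_pi_div_pos hm)
  rw [U_real_cos]
  have hj' : (0 : ℝ) ≤ j + 1 := by exact_mod_cast (by omega : (0 : ℤ) ≤ j + 1)
  have hjm' : (j : ℝ) + 1 ≤ m := by exact_mod_cast (by omega : j + 1 ≤ m)
  refine sin_nonneg_of_nonneg_of_le_pi (by positivity) ?_
  calc (j + 1) * (π / m) ≤ m * (π / m) := by gcongr
    _ = π := by field_simp

theorem U_eval_cos_pi_div {m : ℕ} (hm : 1 < m) :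
    (U ℝ (2 * m)).eval (cos (π / m)) = 1 ∧ (U ℝ (2 * m - 1)).eval (cos (π / m)) = 0 := by
  have hm' : (m : ℝ) ≠ 0 := by positivity
  have hsin := (sin_pi_div_pos hm).ne'
  have h₁ := U_real_cos (π / m) (2 * m)
  have h₂ := U_real_cos (π / m) (2 * m - 1)
  push_cast at h₁ h₂
  rw [show (2 * m + 1 : ℝ) * (π / m) = π / m + 2 * π by field_simp; ring, sin_add_two_pi] at h₁
  rw [show (2 * m - 1 + 1 : ℝ) * (π / m) = 2 * π by field_simp; ring, sin_two_pi] at h₂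
  exact ⟨(mul_eq_right₀ hsin).1 h₁, (mul_eq_zero.1 h₂).resolve_right hsin⟩

end Chebyshev

namespace BasedRootSystem

open scoped NNReal
open Polynomial Polynomial.Chebyshev

variable {V : Type*} [AddCommGroup V] [Module ℝ V] (R : BasedRootSystem V) {α β γ v : V}

def coroot (α : V) : Module.Dual ℝ V := (2 : ℝ) • R.form.flip α

theorem coroot_apply (α v : V) : R.coroot α v = 2 * R.form v α := rfl

theorem coroot_self (hα : α ∈ R.simples) : R.coroot α α = 2 := by
  simp [coroot_apply, R.norm_one α hα]

noncomputable def refl (hα : α ∈ R.simples) : V ≃ₗ[ℝ] V :=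
  Module.reflection (R.coroot_self hα)

theorem refl_apply (hα : α ∈ R.simples) (v : V) : R.refl hα v = v - (2 * R.form v α) • α :=
  Module.reflection_apply v _

theorem refl_apply_self (hα : α ∈ R.simples) : R.refl hα α = -α :=
  Module.reflection_apply_self _

theorem refl_apply_of_form_eq_zero (hα : α ∈ R.simples) (h : R.form v α = 0) :
    R.refl hα v = v := by
  simp [refl_apply, h]

theorem refl_mul_self (hα : α ∈ R.simples) : R.refl hα * R.refl hα = 1 :=
  LinearEquiv.ext (Module.involutive_reflection _)

theorem isRefl_iff (hα : α ∈ R.simples) {g : V ≃ₗ[ℝ] V} : R.IsRefl α g ↔ g = R.refl hα := by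
  simp [IsRefl, LinearEquiv.ext_iff, refl_apply, R.norm_one α hα]

def simpleRefls : Set (V ≃ₗ[ℝ] V) := {g | ∃ α ∈ R.simples, R.IsRefl α g}

theorem mem_simpleRefls {g : V ≃ₗ[ℝ] V} :
    g ∈ R.simpleRefls ↔ ∃ α, ∃ hα : α ∈ R.simples, g = R.refl hα :=
  ⟨fun ⟨α, hα, h⟩ => ⟨α, hα, (R.isRefl_iff hα).1 h⟩,
    fun ⟨α, hα, h⟩ => ⟨α, hα, (R.isRefl_iff hα).2 h⟩⟩

theorem refl_mem_simpleRefls (hα : α ∈ R.simples) : R.refl hα ∈ R.simpleRefls :=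
  R.mem_simpleRefls.2 ⟨α, hα, rfl⟩

theorem mul_self_of_mem_simpleRefls : ∀ g ∈ R.simpleRefls, g * g = 1 := by
  intro g hg
  obtain ⟨α, hα, rfl⟩ := R.mem_simpleRefls.1 hg
  exact R.refl_mul_self hα

theorem refl_mem_W (hα : α ∈ R.simples) : R.refl hα ∈ R.W :=
  Subgroup.subset_closure (R.refl_mem_simpleRefls hα)

theorem length_eq_wordLength (w : V ≃ₗ[ℝ] V) : R.length w = wordLength R.simpleRefls w := rfl

theorem eq_zero_of_sum_smul_eq_zero {c : V →₀ ℝ≥0} (hc : ↑c.support ⊆ R.simples)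
    (h : (c.sum fun v t => t • v) = 0) : c = 0 := by
  refine Finsupp.support_eq_empty.1 (R.posIndep c.support hc (fun v => c v) (fun v hv => ?_) ?_)
  · exact_mod_cast pos_iff_ne_zero.2 (Finsupp.mem_support_iff.1 hv)
  · simpa [Finsupp.sum, NNReal.smul_def] using h

theorem neg_notMem_cone (hβ : β ∈ R.simples) : -β ∉ Submodule.span ℝ≥0 R.simples := by
  classical
  intro h
  obtain ⟨c, hc, hsum⟩ := Submodule.mem_span_set.1 h
  have h0 := R.eq_zero_of_sum_smul_eq_zero (c := c + Finsupp.single β 1) ?_ ?_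
  · simpa using DFunLike.congr_fun h0 β
  · intro x hx
    rcases Finset.mem_union.1 (Finsupp.support_add hx) with hx | hx
    · exact hc hx
    · rw [Finsupp.support_single _ one_ne_zero, Finset.mem_singleton] at hx
      exact hx ▸ hβ
  · rw [Finsupp.sum_add_index' (by simp) (fun _ _ _ => add_smul _ _ _), hsum,
      Finsupp.sum_single_index (by simp)]
    simp

theorem refl_inv (hα : α ∈ R.simples) : (R.refl hα)⁻¹ = R.refl hα :=
  Module.reflection_inv _

theorem refl_mul_refl_pow_apply_self (hα : α ∈ R.simples) (hβ : β ∈ R.simples) (k : ℕ) :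
    ((R.refl hα * R.refl hβ) ^ k) α =
      (U ℝ (2 * k)).eval (-R.form α β) • α + (U ℝ (2 * k - 1)).eval (-R.form α β) • β := by
  have ht : 4 * (-R.form α β) ^ 2 - 2 = R.coroot α β * R.coroot β α - 2 := by
    simp only [coroot_apply, R.form_symm β α]; ring
  obtain ⟨h₁, h₂⟩ := S_eval_add_S_eval_eq_U_eval (-R.form α β) k
  refine (Module.reflection_mul_reflection_pow_apply_self _ _ k _ ht).trans ?_
  rw [← h₁, ← h₂]
  simp only [coroot_apply]
  congr 2
  ring

theorem refl_mul_refl_mul_refl_pow_apply_self (hα : α ∈ R.simples) (hβ : β ∈ R.simples)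
    (k : ℕ) : (R.refl hβ * (R.refl hα * R.refl hβ) ^ k) α =
      (U ℝ (2 * k)).eval (-R.form α β) • α + (U ℝ (2 * k + 1)).eval (-R.form α β) • β := by
  have ht : 4 * (-R.form α β) ^ 2 - 2 = R.coroot α β * R.coroot β α - 2 := by
    simp only [coroot_apply, R.form_symm β α]; ring
  have h₁ := (S_eval_add_S_eval_eq_U_eval (-R.form α β) k).1
  have h₂ := (S_eval_add_S_eval_eq_U_eval (-R.form α β) (k + 1)).2
  push_cast at h₂
  rw [add_sub_cancel_right, show 2 * ((k : ℤ) + 1) - 1 = 2 * k + 1 by ring] at h₂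
  refine (Module.reflection_mul_reflection_mul_reflection_pow_apply_self _ _ k _ ht).trans ?_
  rw [← h₁, ← h₂]
  simp only [coroot_apply]
  congr 2
  ring

theorem exists_form_sub_smul_sub_smul_eq_zero (hα : α ∈ R.simples) (hβ : β ∈ R.simples)
    (hc : R.form α β ^ 2 ≠ 1) (v : V) :
    ∃ a b : ℝ, R.form (v - a • α - b • β) α = 0 ∧ R.form (v - a • α - b • β) β = 0 := by
  have hc' : 1 - R.form α β ^ 2 ≠ 0 := sub_ne_zero.2 (Ne.symm hc)
  refine ⟨(R.form v α - R.form α β * R.form v β) / (1 - R.form α β ^ 2),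
    (R.form v β - R.form α β * R.form v α) / (1 - R.form α β ^ 2), ?_, ?_⟩ <;>
  · simp only [map_sub, map_smul, LinearMap.sub_apply, LinearMap.smul_apply, smul_eq_mul,
      R.norm_one α hα, R.norm_one β hβ, R.form_symm β α]
    field_simp
    ring

theorem refl_mul_refl_pow_apply_self_of_form_eq (hα : α ∈ R.simples) (hβ : β ∈ R.simples)
    {m : ℕ} (hm : 1 < m) (h : R.form α β = -Real.cos (Real.pi / m)) :
    ((R.refl hα * R.refl hβ) ^ m) α = α := by
  obtain ⟨hU₁, hU₂⟩ := U_eval_cos_pi_div hm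
  rw [refl_mul_refl_pow_apply_self, h, neg_neg, hU₁, hU₂]
  simp

theorem refl_mul_refl_pow_apply_of_form_eq_zero (hα : α ∈ R.simples) (hβ : β ∈ R.simples)
    (hvα : R.form v α = 0) (hvβ : R.form v β = 0) (m : ℕ) :
    ((R.refl hα * R.refl hβ) ^ m) v = v := by
  have hmem : R.refl hα * R.refl hβ ∈ MulAction.stabilizer (V ≃ₗ[ℝ] V) v := by
    rw [MulAction.mem_stabilizer_iff]
    change R.refl hα (R.refl hβ v) = v
    rw [R.refl_apply_of_form_eq_zero hβ hvβ, R.refl_apply_of_form_eq_zero hα hvα]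
  exact MulAction.mem_stabilizer_iff.1 (pow_mem hmem m)

/-- `s_α s_β` fixes the common kernel of `⟨·, α⟩` and `⟨·, β⟩`, which is complementary to
`ℝα + ℝβ` because `|⟨α, β⟩| < 1`. -/
theorem refl_mul_refl_pow_eq_one (hα : α ∈ R.simples) (hβ : β ∈ R.simples) {m : ℕ}
    (hm : 1 < m) (h : R.form α β = -Real.cos (Real.pi / m)) :
    (R.refl hα * R.refl hβ) ^ m = 1 := by
  have hfixα := R.refl_mul_refl_pow_apply_self_of_form_eq hα hβ hm h
  have hfixβ : ((R.refl hα * R.refl hβ) ^ m) β = β := by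
    have hβα := R.refl_mul_refl_pow_apply_self_of_form_eq hβ hα hm (by rw [R.form_symm, h])
    rw [show R.refl hα * R.refl hβ = (R.refl hβ * R.refl hα)⁻¹ by
      rw [mul_inv_rev, refl_inv, refl_inv], inv_pow]
    have := congrArg (⇑((R.refl hβ * R.refl hα) ^ m)⁻¹) hβα
    rwa [← LinearEquiv.mul_apply, inv_mul_cancel, LinearEquiv.coe_one, id, eq_comm] at this
  have hc : R.form α β ^ 2 ≠ 1 := by
    rw [h, neg_sq]
    nlinarith [sin_pi_div_pos hm, Real.sin_sq_add_cos_sq (Real.pi / m)]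
  ext v
  obtain ⟨a, b, ha, hb⟩ := R.exists_form_sub_smul_sub_smul_eq_zero hα hβ hc v
  have := R.refl_mul_refl_pow_apply_of_form_eq_zero hα hβ ha hb m
  rw [map_sub, map_sub, map_smul, map_smul, hfixα, hfixβ, sub_left_inj, sub_left_inj] at this
  exact this

theorem exists_apply_eq_of_wordLength_le (hα : α ∈ R.simples) (hβ : β ∈ R.simples) (hne : α ≠ β)
    {u : V ≃ₗ[ℝ] V} (hu : u ∈ Subgroup.closure {R.refl hα, R.refl hβ})
    (hle : wordLength {R.refl hα, R.refl hβ} u ≤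
      wordLength {R.refl hα, R.refl hβ} (u * R.refl hα)) :
    ∃ p q : ℝ, 0 ≤ p ∧ 0 ≤ q ∧ u α = p • α + q • β := by
  set n := wordLength {R.refl hα, R.refl hβ} u with hn
  have hU : ∀ i : ℤ, -1 ≤ i → i ≤ n → 0 ≤ (U ℝ i).eval (-R.form α β) := by
    intro i hi hin
    rcases R.pairing α hα β hβ hne with ⟨m, hm, hc⟩ | hc
    · have hnm := wordLength_lt_of_pow_eq_one (R.refl_mul_self hα) (R.refl_mul_self hβ)
        (by omega) (R.refl_mul_refl_pow_eq_one hα hβ hm hc) hu hle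
      rw [hc, neg_neg]
      exact U_eval_cos_pi_div_nonneg hm hi (by omega)
    · exact U_eval_nonneg_of_one_le (by linarith) hi
  rw [eq_prod_altWord_of_wordLength_le (R.refl_mul_self hα) (R.refl_mul_self hβ) hu hle, ← hn]
  obtain ⟨k, hk | hk⟩ := Nat.even_or_odd' n
  · rw [hk, prod_altWord_two_mul, refl_mul_refl_pow_apply_self]
    exact ⟨_, _, hU _ (by omega) (by omega), hU _ (by omega) (by omega), rfl⟩
  · rw [hk, prod_altWord_two_mul_add_one, refl_mul_refl_mul_refl_pow_apply_self]
    exact ⟨_, _, hU _ (by omega) (by omega), hU _ (by omega) (by omega), rfl⟩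

/-- Humphreys' Theorem 5.4. -/
theorem apply_mem_span_simples_of_length_le {w : V ≃ₗ[ℝ] V} (hw : w ∈ R.W)
    (hγ : γ ∈ R.simples) (h : R.length w ≤ R.length (w * R.refl hγ)) :
    w γ ∈ Submodule.span ℝ≥0 R.simples := by
  rw [length_eq_wordLength, length_eq_wordLength] at h
  induction hn : wordLength R.simpleRefls w using Nat.strong_induction_on generalizing w γ with
  | _ n ih =>
  have hS := R.mul_self_of_mem_simpleRefls
  by_cases hw1 : w = 1
  · subst hw1
    exact Submodule.subset_span hγ
  obtain ⟨s, hs, hlt⟩ := exists_wordLength_mul_lt hS hw hw1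
  obtain ⟨β, hβ, rfl⟩ := R.mem_simpleRefls.1 hs
  have hne : γ ≠ β := by rintro rfl; omega
  have hT₂ : {R.refl hγ, R.refl hβ} ⊆ R.simpleRefls := by
    rintro _ (rfl | rfl) <;> exact R.refl_mem_simpleRefls _
  have hS₂ : ∀ t ∈ ({R.refl hγ, R.refl hβ} : Set (V ≃ₗ[ℝ] V)), t * t = 1 :=
    fun t ht => hS t (hT₂ ht)
  obtain ⟨v, u, rfl, hu, hlen, hmin⟩ := exists_mul_eq_wordLength_add_eq hS hT₂ hw
  have hv : v ∈ R.W := by simpa using mul_mem hw (inv_mem (Subgroup.closure_mono hT₂ hu))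
  have hu1 : 0 < wordLength {R.refl hγ, R.refl hβ} u := by
    refine Nat.pos_of_ne_zero fun h0 => ?_
    have := hmin _ (Or.inr rfl)
    rw [eq_one_of_wordLength_eq_zero hS₂ hu h0, mul_one] at hlt
    omega
  have hvγ := ih _ (by omega) hv hγ (hmin _ (Or.inl rfl)) rfl
  have hvβ := ih _ (by omega) hv hβ (hmin _ (Or.inr rfl)) rfl
  have hdih : wordLength {R.refl hγ, R.refl hβ} u ≤
      wordLength {R.refl hγ, R.refl hβ} (u * R.refl hγ) := by
    have huγ := mul_mem hu (Subgroup.subset_closure (Or.inl rfl))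
    have h₁ := wordLength_mul_le hS hv (Subgroup.closure_mono hT₂ huγ)
    have h₂ := wordLength_le_of_subset hS₂ hT₂ huγ
    rw [← mul_assoc] at h₁
    omega
  obtain ⟨p, q, hp, hq, he⟩ := R.exists_apply_eq_of_wordLength_le hγ hβ hne hu hdih
  rw [LinearEquiv.mul_apply, he, map_add, map_smul, map_smul]
  exact add_mem (Submodule.smul_mem _ (⟨p, hp⟩ : ℝ≥0) hvγ)
    (Submodule.smul_mem _ (⟨q, hq⟩ : ℝ≥0) hvβ)

theorem eq_one_of_forall_apply_simple_eq {w : V ≃ₗ[ℝ] V} (hw : w ∈ R.W)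
    (hfix : ∀ α ∈ R.simples, w α = α) : w = 1 := by
  by_contra hw1
  obtain ⟨s, hs, hlt⟩ := exists_wordLength_mul_lt R.mul_self_of_mem_simpleRefls hw hw1
  obtain ⟨β, hβ, rfl⟩ := R.mem_simpleRefls.1 hs
  have hpos := R.apply_mem_span_simples_of_length_le (mul_mem hw (R.refl_mem_W hβ)) hβ
    (by rw [mul_assoc, R.refl_mul_self hβ, mul_one]; exact hlt.le)
  rw [LinearEquiv.mul_apply, R.refl_apply_self, map_neg, hfix β hβ] at hpos
  exact R.neg_notMem_cone hβ hpos

def orbit (α : V) : Set V := {x | ∃ w ∈ R.W, x = w α}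

theorem apply_mem_orbit {w : V ≃ₗ[ℝ] V} (hw : w ∈ R.W) {x : V} (hx : x ∈ R.orbit α) :
    w x ∈ R.orbit α := by
  obtain ⟨u, hu, rfl⟩ := hx
  exact ⟨w * u, mul_mem hw hu, rfl⟩

theorem apply_mem_span_orbit {w : V ≃ₗ[ℝ] V} (hw : w ∈ R.W) {x : V}
    (hx : x ∈ Submodule.span ℝ (R.orbit α)) : w x ∈ Submodule.span ℝ (R.orbit α) := by
  have hmap : (Submodule.span ℝ (R.orbit α)).map (w : V →ₗ[ℝ] V) ≤
      Submodule.span ℝ (R.orbit α) := by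
    rw [Submodule.map_span]
    exact Submodule.span_mono (by rintro _ ⟨y, hy, rfl⟩; exact R.apply_mem_orbit hw hy)
  exact hmap ⟨x, hx, rfl⟩

theorem mem_of_refl_apply_mem {M : Submodule ℝ V} (hβ : β ∈ R.simples) {x : V} (hx : x ∈ M)
    (hβx : R.refl hβ x ∈ M) (h : R.form x β ≠ 0) : β ∈ M := by
  have hsub : x - R.refl hβ x = (2 * R.form x β) • β := by rw [refl_apply]; abel
  have := M.smul_mem (2 * R.form x β)⁻¹ (M.sub_mem hx hβx)
  rwa [hsub, smul_smul, inv_mul_cancel₀ (by simpa using h), one_smul] at this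

theorem simples_subset_of_irred (hirr : R.Irred) {M : Set V} {p : V} (hp : p ∈ R.simples)
    (hpM : p ∈ M) (hM : ∀ a ∈ R.simples, ∀ b ∈ R.simples, a ∈ M → R.form a b ≠ 0 → b ∈ M) :
    R.simples ⊆ M := by
  rcases hirr (R.simples ∩ M) (R.simples \ M) (Set.inter_union_sdiff _ _)
    (fun a ha b hb => by_contra fun h => hb.2 (hM a ha.1 b hb.1 ha.2 h)) with h | h
  · exact absurd (h ▸ ⟨hp, hpM⟩ : p ∈ (∅ : Set V)) id
  · exact Set.sdiff_eq_empty.1 h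

theorem simples_subset_span_orbit (hirr : R.Irred) (hα : α ∈ R.roots) :
    R.simples ⊆ Submodule.span ℝ (R.orbit α) := by
  obtain ⟨w, hw, p, hp, rfl⟩ := hα
  refine R.simples_subset_of_irred hirr hp (Submodule.subset_span ⟨w⁻¹, inv_mem hw, ?_⟩)
    fun a _ b hb ha h =>
      R.mem_of_refl_apply_mem hb ha (R.apply_mem_span_orbit (R.refl_mem_W hb) ha) h
  rw [← LinearEquiv.mul_apply, inv_mul_cancel, LinearEquiv.coe_one, id]

theorem roots_subset_span_simples : R.roots ⊆ Submodule.span ℝ R.simples := by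
  rintro _ ⟨w, hw, p, hp, rfl⟩
  suffices ∀ v ∈ Submodule.span ℝ R.simples, w v ∈ Submodule.span ℝ R.simples from
    this p (Submodule.subset_span hp)
  have hrefl : ∀ s ∈ R.simpleRefls, ∀ v ∈ Submodule.span ℝ R.simples,
      s v ∈ Submodule.span ℝ R.simples := by
    intro s hs v hv
    obtain ⟨β, hβ, rfl⟩ := R.mem_simpleRefls.1 hs
    rw [refl_apply]
    exact Submodule.sub_mem _ hv (Submodule.smul_mem _ _ (Submodule.subset_span hβ))
  induction hw using Subgroup.closure_induction'' with
  | mem s hs => exact hrefl s hs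
  | inv_mem s hs =>
    obtain ⟨β, hβ, rfl⟩ := R.mem_simpleRefls.1 hs
    rw [refl_inv]
    exact hrefl _ hs
  | one => exact fun v hv => hv
  | mul s t _ _ hs ht => exact fun v hv => hs _ (ht v hv)

theorem span_orbit_eq_span_roots (hirr : R.Irred) (hα : α ∈ R.roots) :
    Submodule.span ℝ (R.orbit α) = Submodule.span ℝ R.roots := by
  refine le_antisymm (Submodule.span_mono ?_) (Submodule.span_le.2 fun x hx =>
    Submodule.span_le.2 (R.simples_subset_span_orbit hirr hα) (R.roots_subset_span_simples hx))
  obtain ⟨w₀, hw₀, p, hp, rfl⟩ := hα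
  rintro _ ⟨w, hw, rfl⟩
  exact ⟨w * w₀, mul_mem hw hw₀, p, hp, rfl⟩

theorem eq_one_of_forall_apply_orbit_eq (hirr : R.Irred) (hα : α ∈ R.roots)
    {w : V ≃ₗ[ℝ] V} (hw : w ∈ R.W) (hfix : ∀ x ∈ R.orbit α, w x = x) : w = 1 :=
  R.eq_one_of_forall_apply_simple_eq hw fun _ hp =>
    LinearMap.eqOn_span (f := (w : V →ₗ[ℝ] V)) (g := LinearMap.id) hfix
      (R.simples_subset_span_orbit hirr hα hp)

theorem finite_W_of_finite_orbit (hirr : R.Irred) (hα : α ∈ R.roots)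
    (hfin : (R.orbit α).Finite) : (R.W : Set (V ≃ₗ[ℝ] V)).Finite := by
  have := hfin.to_subtype
  refine Set.finite_coe_iff.1 (Finite.of_injective
    (fun (w : R.W) (x : R.orbit α) => (⟨w.1 x, R.apply_mem_orbit w.2 x.2⟩ : R.orbit α)) ?_)
  intro w₁ w₂ h
  have hfix : ∀ x ∈ R.orbit α, (w₂.1⁻¹ * w₁.1) x = x := fun x hx => by
    rw [LinearEquiv.mul_apply, show w₁.1 x = w₂.1 x from congrArg Subtype.val (congrFun h ⟨x, hx⟩),
      ← LinearEquiv.mul_apply, inv_mul_cancel, LinearEquiv.coe_one, id]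
  exact Subtype.ext (inv_mul_eq_one.1
    (R.eq_one_of_forall_apply_orbit_eq hirr hα (mul_mem (inv_mem w₂.2) w₁.2) hfix)).symm

theorem eq_one_of_forall_conj_mem_stabilizer (hirr : R.Irred) (hα : α ∈ R.roots)
    {g : V ≃ₗ[ℝ] V} (hg : ∀ w ∈ R.W, w⁻¹ * g * w ∈ R.W ∧ (w⁻¹ * g * w) α = α) : g = 1 := by
  have hgW : g ∈ R.W := by simpa using (hg 1 (one_mem _)).1
  refine R.eq_one_of_forall_apply_orbit_eq hirr hα hgW ?_
  rintro _ ⟨u, hu, rfl⟩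
  have h := congrArg u (hg u hu).2
  rwa [← LinearEquiv.mul_apply, ← mul_assoc, ← mul_assoc, mul_inv_cancel, one_mul] at h

end BasedRootSystem

/-- for irreducible `(W,S)` and a root `α` with stabilizer `Z`:
the span of the orbit `Wα` is the span of `Φ`; `W` acts faithfully on `Wα`;
the intersection of all `W`-conjugates of `Z` is trivial; and if `Wα` is finite
then `W` is finite. -/
theorem statement5 {V : Type*} [AddCommGroup V] [Module ℝ V]
    (R : BasedRootSystem V) (hirr : R.Irred)
    (α : V) (hα : α ∈ R.roots) :
    Submodule.span ℝ { x | ∃ w ∈ R.W, x = w α } = Submodule.span ℝ R.roots ∧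
    (∀ w ∈ R.W, (∀ x ∈ { x | ∃ u ∈ R.W, x = u α }, w x = x) → w = 1) ∧
    (∀ g : V ≃ₗ[ℝ] V,
      (∀ w ∈ R.W, w⁻¹ * g * w ∈ R.W ∧ (w⁻¹ * g * w) α = α) → g = 1) ∧
    ({ x | ∃ w ∈ R.W, x = w α }.Finite → (R.W : Set (V ≃ₗ[ℝ] V)).Finite) :=
  ⟨R.span_orbit_eq_span_roots hirr hα, fun _ hw => R.eq_one_of_forall_apply_orbit_eq hirr hα hw,
    fun _ => R.eq_one_of_forall_conj_mem_stabilizer hirr hα, R.finite_W_of_finite_orbit hirr hα⟩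
end

section
/- Let Y̅ be a closed salient W-invariant cone in V, and let α ∈ Y̅ be a nonzero eigenvector of w ∈ W with real eigenvalue λ. Then λ > 0, and if λ ≠ 1 the λ-eigenspace V_{w,λ} intersected with Y̅ is a totally isotropic subset of V (i.e., ⟨x,y⟩ = 0 for all x,y ∈ V_{w,λ} ∩ Y̅). -/
open scoped BigOperators

/-! A nonzero vector `α` of the salient cone `Y` cannot be sent by `w` to a nonpositive multiple
of itself: `λ = 0` contradicts injectivity and `λ < 0` puts `λα ≠ 0` in `Y ∩ (-Y)`. Since `w`
preserves the form, `⟨u, v⟩ = ⟨w u, w v⟩ = λ² ⟨u, v⟩` for `u, v ∈ V_{w,λ}`, and `λ² ≠ 1`. -/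

theorem LinearMap.BilinForm.apply_eq_zero_of_eigenvectors {K V : Type*} [Field K]
    [AddCommGroup V] [Module K V] {B : LinearMap.BilinForm K V} {f : V →ₗ[K] V}
    (hB : ∀ u v, B (f u) (f v) = B u v) {a b : K} {u v : V} (hu : f u = a • u)
    (hv : f v = b • v) (hab : a * b ≠ 1) : B u v = 0 := by
  by_contra hne
  refine hab ((mul_eq_right₀ hne).mp ?_)
  calc (a * b) * B u v = B (a • u) (b • v) := by
        simp only [map_smul, LinearMap.smul_apply, smul_eq_mul]; ring
    _ = B u v := by rw [← hu, ← hv, hB]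

theorem pos_of_eigenvector_mem_salient_cone {V : Type*} [AddCommGroup V] [Module ℝ V]
    {Y : Set V} (hcone : ∀ t : ℝ, 0 < t → ∀ y ∈ Y, t • y ∈ Y) (hsalient : Y ∩ (-Y) = {0})
    {f : V ≃ₗ[ℝ] V} (hf : ∀ y ∈ Y, f y ∈ Y) {lam : ℝ} {α : V} (hαY : α ∈ Y) (hα0 : α ≠ 0)
    (heig : f α = lam • α) : 0 < lam := by
  have hne : lam • α ≠ 0 := heig ▸ f.map_ne_zero_iff.mpr hα0
  refine lt_of_le_of_ne (not_lt.mp fun hneg => hne ?_) (left_ne_zero_of_smul hne).symm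
  have hmem : lam • α ∈ Y ∩ (-Y) :=
    ⟨heig ▸ hf α hαY, by simpa [Set.mem_neg, neg_smul] using hcone (-lam) (by linarith) α hαY⟩
  rwa [hsalient] at hmem

namespace BasedRootSystem

variable {V : Type*} [AddCommGroup V] [Module ℝ V]

theorem IsRefl.form_map_map {R : BasedRootSystem V} {α : V} {g : V ≃ₗ[ℝ] V}
    (hg : R.IsRefl α g) (hα : R.form α α ≠ 0) (u v : V) :
    R.form (g u) (g v) = R.form u v := by
  rw [hg u, hg v]
  simp only [map_sub, map_smul, LinearMap.sub_apply, LinearMap.smul_apply, smul_eq_mul,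
    R.form_symm α v]
  field_simp
  ring

theorem form_map_map_of_mem_W (R : BasedRootSystem V) {g : V ≃ₗ[ℝ] V} (hg : g ∈ R.W)
    (u v : V) : R.form (g u) (g v) = R.form u v := by
  induction hg using Subgroup.closure_induction generalizing u v with
  | mem g hg =>
    obtain ⟨α, hα, hrefl⟩ := hg
    exact hrefl.form_map_map (by rw [R.norm_one α hα]; exact one_ne_zero) u v
  | one => rfl
  | mul a b _ _ iha ihb => exact (iha (b u) (b v)).trans (ihb u v)
  | inv a _ iha => simpa using (iha (a⁻¹ u) (a⁻¹ v)).symm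

end BasedRootSystem

theorem statement13_general {V : Type*} [AddCommGroup V] [Module ℝ V]
    (R : BasedRootSystem V)
    (Y : Set V)
    (hcone : ∀ t : ℝ, 0 < t → ∀ y ∈ Y, t • y ∈ Y)
    (hsalient : Y ∩ (-Y) = {0})
    (hWinv : ∀ g ∈ R.W, ∀ y ∈ Y, g y ∈ Y)
    (w : V ≃ₗ[ℝ] V) (hw : w ∈ R.W) (lam : ℝ)
    (α : V) (hαY : α ∈ Y) (hα0 : α ≠ 0) (heig : w α = lam • α) :
    0 < lam ∧ (lam ≠ 1 →
      ∀ u ∈ { v | w v = lam • v } ∩ Y, ∀ v ∈ { v | w v = lam • v } ∩ Y,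
        R.form u v = 0) := by
  have hlam : 0 < lam :=
    pos_of_eigenvector_mem_salient_cone hcone hsalient (hWinv w hw) hαY hα0 heig
  refine ⟨hlam, fun hne u hu v hv => ?_⟩
  have hsq : lam * lam ≠ 1 := fun h =>
    (mul_self_eq_one_iff.mp h).elim hne fun h' => by linarith
  exact LinearMap.BilinForm.apply_eq_zero_of_eigenvectors (f := (w : V →ₗ[ℝ] V))
    (R.form_map_map_of_mem_W hw) hu.1 hv.1 hsq

/-- if `Y` is a closed salient `W`-invariant cone and `α ∈ Y`
is a nonzero eigenvector of `w ∈ W` with real eigenvalue `λ`, then `λ > 0`,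
and if `λ ≠ 1` then `V_{w,λ} ∩ Y` is totally isotropic. -/
theorem statement13 {V : Type*} [AddCommGroup V] [Module ℝ V]
    [TopologicalSpace V] [IsTopologicalAddGroup V] [ContinuousSMul ℝ V]
    [T2Space V] [FiniteDimensional ℝ V]
    (R : BasedRootSystem V)
    (Y : Set V) (hclosed : IsClosed Y) (hconv : Convex ℝ Y)
    (hcone : ∀ t : ℝ, 0 < t → ∀ y ∈ Y, t • y ∈ Y)
    (hsalient : Y ∩ (-Y) = {0})
    (hWinv : ∀ g ∈ R.W, ∀ y ∈ Y, g y ∈ Y)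
    (w : V ≃ₗ[ℝ] V) (hw : w ∈ R.W) (lam : ℝ)
    (α : V) (hαY : α ∈ Y) (hα0 : α ≠ 0) (heig : w α = lam • α) :
    0 < lam ∧ (lam ≠ 1 →
      ∀ u ∈ { v | w v = lam • v } ∩ Y, ∀ v ∈ { v | w v = lam • v } ∩ Y,
        R.form u v = 0) :=
  statement13_general R Y hcone hsalient hWinv w hw lam α hαY hα0 heig
end

section
/- Let V be a real vector space with symmetric bilinear form, suppose every pair of distinct simple roots α ≠ β ∈ Π satisfies ⟨α,β⟩ < −1 (generic universal root system), and |Π| ≥ 2. Then the imaginary cone Z satisfies Z ∩ Q = {0}, where Q = {v ∈ V : ⟨v,v⟩ = 0}; that is, the only isotropic vector in the imaginary cone is zero. -/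
open scoped BigOperators

namespace BasedRootSystem

variable {V : Type*} [AddCommGroup V] [Module ℝ V]

lemma form_invariant (R : BasedRootSystem V) {w : V ≃ₗ[ℝ] V} (hw : w ∈ R.W) :
    ∀ u v : V, R.form (w u) (w v) = R.form u v := by
  induction hw using Subgroup.closure_induction with
  | mem g hg =>
    obtain ⟨α, hα, hrefl⟩ := hg
    intro u v
    rw [hrefl u, hrefl v, R.norm_one α hα]
    simp only [map_sub, map_smul, LinearMap.sub_apply, LinearMap.smul_apply, smul_eq_mul,
      R.norm_one α hα]
    rw [R.form_symm α v]
    ring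
  | one => intro u v; simp
  | mul x y hx hy ihx ihy =>
    intro u v
    have h1 : (x * y) u = x (y u) := rfl
    have h2 : (x * y) v = x (y v) := rfl
    rw [h1, h2]
    exact (ihx (y u) (y v)).trans (ihy u v)
  | inv x hx ihx =>
    intro u v
    have e1 : x (x⁻¹ u) = u := x.apply_symm_apply u
    have e2 : x (x⁻¹ v) = v := x.apply_symm_apply v
    have h := (ihx (x⁻¹ u) (x⁻¹ v)).symm
    rwa [e1, e2] at h

lemma K_isotropic_eq_zero (R : BasedRootSystem V)
    (hgen : ∀ α ∈ R.simples, ∀ β ∈ R.simples, α ≠ β → R.form α β < -1)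
    {k : V} (hk : k ∈ R.K) (hiso : R.form k k = 0) : k = 0 := by
  obtain ⟨⟨s, c, hsPi, hc0, hks⟩, hneg⟩ := hk
  classical
  set s' : Finset V := s.filter (fun x => c x ≠ 0) with hs'
  have hks' : k = ∑ x ∈ s', c x • x := by
    rw [hks]
    refine (Finset.sum_filter_of_ne ?_).symm
    intro x hx h hc
    exact h (by simp [hc])
  have hsPi' : ∀ x ∈ s', x ∈ R.simples := fun x hx => hsPi (Finset.mem_filter.mp hx).1
  have hc0' : ∀ x ∈ s', 0 < c x := by
    intro x hx
    have h1 := hc0 x (Finset.mem_filter.mp hx).1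
    have h2 := (Finset.mem_filter.mp hx).2
    exact lt_of_le_of_ne h1 (Ne.symm h2)
  have hformk : ∀ x : V, R.form x k = ∑ y ∈ s', c y * R.form x y := by
    intro x
    rw [hks']
    simp [Finset.mul_sum, mul_comm]
  have hexp : R.form k k = ∑ x ∈ s', c x * R.form x k := by
    have h1 : R.form k = ∑ x ∈ s', c x • R.form x := by
      rw [hks']; simp
    rw [h1]
    simp [LinearMap.sum_apply]
  by_contra hk0
  have hne : s'.Nonempty := by
    rcases Finset.eq_empty_or_nonempty s' with h | h
    · exact (hk0 (by simp [hks', h])).elim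
    · exact h
  -- each term c x * form x k is ≤ 0 and sums to 0
  have hterm : ∀ x ∈ s', c x * R.form x k = 0 := by
    have hnonpos : ∀ x ∈ s', c x * R.form x k ≤ 0 := by
      intro x hx
      have := hneg x (hsPi' x hx)
      have hxk : R.form x k ≤ 0 := by rw [R.form_symm x k]; exact this
      exact mul_nonpos_of_nonneg_of_nonpos (hc0' x hx).le hxk
    exact (Finset.sum_eq_zero_iff_of_nonpos hnonpos).mp (hexp.symm.trans hiso)
  have hformzero : ∀ x ∈ s', R.form x k = 0 := by
    intro x hx
    have := hterm x hx
    have hcx := (hc0' x hx).ne'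
    exact (mul_eq_zero.mp this).resolve_left hcx
  obtain ⟨x0, hx0, hmin⟩ := Finset.exists_min_image s' c hne
  have hx0Pi := hsPi' x0 hx0
  have hsplit : R.form x0 k = c x0 + ∑ y ∈ s'.erase x0, c y * R.form x0 y := by
    rw [hformk x0, ← Finset.add_sum_erase _ _ hx0, R.norm_one x0 hx0Pi]
    ring_nf
  rcases Finset.eq_empty_or_nonempty (s'.erase x0) with he | he
  · have : R.form x0 k = c x0 := by rw [hsplit, he]; simp
    have := hformzero x0 hx0
    linarith [hc0' x0 hx0]
  · have hlt : ∑ y ∈ s'.erase x0, c y * R.form x0 y < ∑ y ∈ s'.erase x0, -(c y) := by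
      apply Finset.sum_lt_sum_of_nonempty he
      intro y hy
      have hyS : y ∈ s' := Finset.mem_of_mem_erase hy
      have hyx0 : y ≠ x0 := Finset.ne_of_mem_erase hy
      have hform := hgen x0 hx0Pi y (hsPi' y hyS) (Ne.symm hyx0)
      have hcy := hc0' y hyS
      nlinarith
    have hge : c x0 ≤ ∑ y ∈ s'.erase x0, c y := by
      obtain ⟨y1, hy1⟩ := he
      calc c x0 ≤ c y1 := hmin y1 (Finset.mem_of_mem_erase hy1)
        _ ≤ ∑ y ∈ s'.erase x0, c y :=
          Finset.single_le_sum (fun y hy => (hc0' y (Finset.mem_of_mem_erase hy)).le) hy1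
    have h0 := hformzero x0 hx0
    rw [hsplit] at h0
    have : ∑ y ∈ s'.erase x0, -(c y) = -(∑ y ∈ s'.erase x0, c y) := by
      rw [Finset.sum_neg_distrib]
    linarith [hlt, hge]

end BasedRootSystem

/-- for a generic universal root system (`⟨α,β⟩ < -1` for all
distinct simple roots, `|Π| ≥ 2`), the only isotropic vector in the imaginary
cone is zero: `𝒵 ∩ 𝒬 = {0}`. -/
theorem statement17 {V : Type*} [AddCommGroup V] [Module ℝ V]
    [FiniteDimensional ℝ V]
    (R : BasedRootSystem V)
    (hns : ∀ v : V, (∀ u : V, R.form v u = 0) → v = 0)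
    (hfin : R.simples.Finite)
    (hgen : ∀ α ∈ R.simples, ∀ β ∈ R.simples, α ≠ β → R.form α β < -1)
    (hcard : 2 ≤ R.simples.ncard) :
    R.imaginaryCone ∩ { v | R.form v v = 0 } = {0} := by
  ext v
  simp only [Set.mem_inter_iff, Set.mem_setOf_eq, Set.mem_singleton_iff]
  constructor
  · rintro ⟨⟨w, hw, k, hk, rfl⟩, hiso⟩
    have hform := R.form_invariant hw k k
    rw [hform] at hiso
    have hk0 : k = 0 := R.K_isotropic_eq_zero hgen hk hiso
    rw [hk0]; exact map_zero _
  · rintro rfl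
    refine ⟨⟨1, one_mem _, 0, ⟨⟨∅, 0, by simp, by simp, by simp⟩, fun α _ => by simp⟩, by simp⟩, by simp⟩
end
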